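/- arXiv:2510.06501 — 4 statements merged into one kernel-verified Lean document; each statement's English description precedes it below -/
import Mathlib

section
/- For any θ₀ ∈ ℝ^d, if X ~ N_d(θ₀, I_d) then E[X · tanh(θ₀ᵀX)] = θ₀. -/
/-!
Write `φ_μ` for the density of `N(μ, I)`. Completing the square gives
`φ_{±θ}(x) = φ_0(x) exp(±⟪θ, x⟫ - ‖θ‖² / 2)`, hence
`(φ_θ + φ_{-θ}) tanh ⟪θ, ·⟫ = φ_θ - φ_{-θ}`. The reflection `x ↦ -x` exchanges `φ_θ` and `φ_{-θ}`
and fixes `tanh ⟪θ, x⟫ x`, so both terms on the left have the same first moment, while the right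
has first moment `θ - (-θ) = 2θ`.
-/

open MeasureTheory
open scoped RealInnerProductSpace

/-- The multivariate Gaussian measure `N_d(μ, I_d)` on `ℝ^d`, defined via its density
with respect to Lebesgue measure. -/
noncomputable def gaussian (d : ℕ) (μ : EuclideanSpace ℝ (Fin d)) :
    Measure (EuclideanSpace ℝ (Fin d)) :=
  volume.withDensity
    (fun x => ENNReal.ofReal ((2 * Real.pi) ^ (-(d : ℝ) / 2) * Real.exp (-‖x - μ‖ ^ 2 / 2)))

open Real

@[fun_prop]
theorem Real.continuous_tanh : Continuous tanh :=
  (continuous_sinh.div continuous_cosh fun x => (cosh_pos x).ne').congr fun x =>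
    (tanh_eq_sinh_div_cosh x).symm

theorem Real.le_exp_sq_div_four (r : ℝ) : r ≤ exp (r ^ 2 / 4) := by
  nlinarith [add_one_le_exp (r ^ 2 / 4), sq_nonneg (r - 2)]

theorem Function.Odd.integral_eq_zero {G E : Type*} [MeasurableSpace G] [AddGroup G]
    [MeasurableNeg G] [NormedAddCommGroup E] [NormedSpace ℝ E] {f : G → E} (hf : f.Odd)
    (μ : Measure G) [μ.IsNegInvariant] : ∫ x, f x ∂μ = 0 := by
  have h := integral_neg_eq_self f μ
  simp only [hf _, integral_neg] at h
  rw [neg_eq_iff_add_eq_zero, ← two_smul ℝ, smul_eq_zero] at h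
  exact h.resolve_left two_ne_zero

section InnerProductSpace

open Module

variable {V : Type*} [NormedAddCommGroup V] [InnerProductSpace ℝ V]

noncomputable def gaussianDensity (μ x : V) : ℝ :=
  (2 * π) ^ (-(finrank ℝ V : ℝ) / 2) * exp (-‖x - μ‖ ^ 2 / 2)

theorem gaussianDensity_nonneg (μ x : V) : 0 ≤ gaussianDensity μ x := by
  unfold gaussianDensity; positivity

theorem gaussianDensity_eq_zero_sub (μ x : V) :
    gaussianDensity μ x = gaussianDensity 0 (x - μ) := by
  rw [gaussianDensity, gaussianDensity, sub_zero]

theorem gaussianDensity_neg_neg (μ x : V) : gaussianDensity (-μ) (-x) = gaussianDensity μ x := by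
  rw [gaussianDensity, gaussianDensity, neg_sub_neg, norm_sub_rev]

theorem gaussianDensity_eq_mul_exp (μ x : V) :
    gaussianDensity μ x = gaussianDensity 0 x * exp (⟪μ, x⟫ - ‖μ‖ ^ 2 / 2) := by
  rw [gaussianDensity, gaussianDensity, sub_zero, mul_assoc, ← exp_add, norm_sub_sq_real,
    real_inner_comm]
  ring_nf

theorem gaussianDensity_add_neg_mul_tanh (θ x : V) :
    (gaussianDensity θ x + gaussianDensity (-θ) x) * tanh ⟪θ, x⟫ =
      gaussianDensity θ x - gaussianDensity (-θ) x := by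
  rw [gaussianDensity_eq_mul_exp θ, gaussianDensity_eq_mul_exp (-θ), inner_neg_left, norm_neg,
    tanh_eq, sub_eq_add_neg, exp_add, sub_eq_add_neg (-_), exp_add]
  field_simp

variable [FiniteDimensional ℝ V] [MeasurableSpace V] [BorelSpace V]

theorem integrable_exp_neg_mul_sq_norm {b : ℝ} (hb : 0 < b) :
    Integrable fun v : V => exp (-b * ‖v‖ ^ 2) := by
  refine (GaussianFourier.integrable_cexp_neg_mul_sq_norm_add (V := V) (b := b)
    (by simpa using hb) 0 0).re.congr (.of_forall fun v => ?_)
  simp [← Complex.ofReal_pow, ← Complex.ofReal_neg, ← Complex.ofReal_mul,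
    Complex.exp_ofReal_re]

theorem integrable_gaussianDensity (μ : V) : Integrable (gaussianDensity μ) := by
  refine (((integrable_exp_neg_mul_sq_norm (V := V) one_half_pos).const_mul
    ((2 * π) ^ (-(finrank ℝ V : ℝ) / 2))).comp_sub_right μ).congr
    (.of_forall fun x => ?_)
  simp only [gaussianDensity]
  ring_nf

theorem integrable_gaussianDensity_zero_smul :
    Integrable fun x : V => gaussianDensity 0 x • x := by
  refine ((integrable_exp_neg_mul_sq_norm (V := V) (b := 1 / 4) (by norm_num)).const_mul
    ((2 * π) ^ (-(finrank ℝ V : ℝ) / 2))).mono' (by unfold gaussianDensity; fun_prop)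
    (.of_forall fun x => ?_)
  rw [norm_smul, norm_of_nonneg (gaussianDensity_nonneg _ _), gaussianDensity, sub_zero,
    mul_assoc]
  gcongr
  calc exp (-‖x‖ ^ 2 / 2) * ‖x‖ ≤ exp (-‖x‖ ^ 2 / 2) * exp (‖x‖ ^ 2 / 4) := by
        gcongr; exact le_exp_sq_div_four _
    _ = exp (-(1 / 4) * ‖x‖ ^ 2) := by rw [← exp_add]; ring_nf

theorem integrable_gaussianDensity_smul (μ : V) :
    Integrable fun x => gaussianDensity μ x • x := by
  refine ((integrable_gaussianDensity_zero_smul.add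
    ((integrable_gaussianDensity 0).smul_const μ)).comp_sub_right μ).congr
    (.of_forall fun x => ?_)
  simp only [Pi.add_apply, ← smul_add, sub_add_cancel, ← gaussianDensity_eq_zero_sub]

theorem integral_gaussianDensity (μ : V) : ∫ x, gaussianDensity μ x = 1 := by
  have h : ∫ x : V, exp (-‖x‖ ^ 2 / 2) = (2 * π) ^ (finrank ℝ V / 2 : ℝ) := by
    convert GaussianFourier.integral_rexp_neg_mul_sq_norm (V := V) one_half_pos using 4 <;> ring
  simp only [gaussianDensity]
  rw [integral_const_mul, integral_sub_right_eq_self (fun x => exp (-‖x‖ ^ 2 / 2)), h,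
    ← rpow_add (by positivity), neg_div, neg_add_cancel, rpow_zero]

theorem integral_gaussianDensity_smul (μ : V) : ∫ x, gaussianDensity μ x • x = μ := by
  have h_odd : ∫ y : V, gaussianDensity 0 y • y = 0 :=
    Function.Odd.integral_eq_zero (fun y => by
      rw [← gaussianDensity_neg_neg, neg_zero, neg_neg, smul_neg]) volume
  calc ∫ x, gaussianDensity μ x • x = ∫ y, gaussianDensity μ (y + μ) • (y + μ) :=
        (integral_add_right_eq_self _ μ).symm
    _ = ∫ y, gaussianDensity 0 y • y + gaussianDensity 0 y • μ := by
        simp only [gaussianDensity_eq_zero_sub μ, add_sub_cancel_right, smul_add]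
    _ = μ := by
        rw [integral_add integrable_gaussianDensity_zero_smul
          ((integrable_gaussianDensity 0).smul_const μ), h_odd, integral_smul_const,
          integral_gaussianDensity, zero_add, one_smul]

theorem integrable_gaussianDensity_mul_tanh_inner_smul (μ θ : V) :
    Integrable fun x => (gaussianDensity μ x * tanh ⟪θ, x⟫) • x := by
  refine ((integrable_gaussianDensity_smul μ).bdd_smul 1 (φ := fun x => tanh ⟪θ, x⟫)
    (by fun_prop) (.of_forall fun x => (abs_tanh_lt_one _).le)).congr (.of_forall fun x => ?_)
  simp only [Pi.smul_apply', smul_smul, mul_comm]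

theorem integral_gaussianDensity_mul_tanh_inner_smul (θ : V) :
    ∫ x, (gaussianDensity θ x * tanh ⟪θ, x⟫) • x = θ := by
  have h_reflect : ∫ x, (gaussianDensity (-θ) x * tanh ⟪θ, x⟫) • x =
      ∫ x, (gaussianDensity θ x * tanh ⟪θ, x⟫) • x := by
    rw [← integral_neg_eq_self]
    simp only [gaussianDensity_neg_neg, inner_neg_right, tanh_neg, mul_neg, neg_smul, smul_neg,
      neg_neg]
  have h_sum : ∫ x, ((gaussianDensity θ x * tanh ⟪θ, x⟫) • x +
      (gaussianDensity (-θ) x * tanh ⟪θ, x⟫) • x) = θ - -θ := by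
    simp only [← add_smul, ← add_mul, gaussianDensity_add_neg_mul_tanh, sub_smul]
    rw [integral_sub (integrable_gaussianDensity_smul θ) (integrable_gaussianDensity_smul (-θ)),
      integral_gaussianDensity_smul, integral_gaussianDensity_smul]
  rw [integral_add (integrable_gaussianDensity_mul_tanh_inner_smul θ θ)
    (integrable_gaussianDensity_mul_tanh_inner_smul (-θ) θ), h_reflect, ← two_smul ℝ,
    sub_neg_eq_add, ← two_smul ℝ θ] at h_sum
  exact smul_right_injective V two_ne_zero h_sum

end InnerProductSpace

theorem integral_gaussian_eq_integral_gaussianDensity_smul {E : Type*} [NormedAddCommGroup E]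
    [NormedSpace ℝ E] (d : ℕ) (μ : EuclideanSpace ℝ (Fin d))
    (f : EuclideanSpace ℝ (Fin d) → E) :
    ∫ x, f x ∂gaussian d μ = ∫ x, gaussianDensity μ x • f x := by
  rw [gaussian, integral_withDensity_eq_integral_toReal_smul (by fun_prop)
    (.of_forall fun _ => ENNReal.ofReal_lt_top)]
  congr with x
  rw [ENNReal.toReal_ofReal (by positivity), gaussianDensity, finrank_euclideanSpace_fin]

/-- if `X ~ N_d(θ₀, I_d)` then `E[X · tanh(θ₀ᵀX)] = θ₀`. -/
theorem integral_tanh_smul_gaussian (d : ℕ) (θ₀ : EuclideanSpace ℝ (Fin d)) :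
    ∫ x, Real.tanh ⟪θ₀, x⟫ • x ∂(gaussian d θ₀) = θ₀ := by
  rw [integral_gaussian_eq_integral_gaussianDensity_smul]
  simpa only [smul_smul] using integral_gaussianDensity_mul_tanh_inner_smul θ₀
end

section
/- For β > 1 there exists a unique m > 0 with m = tanh(βm); moreover the function g(u) = −βu²/2 + log cosh(βu) on ℝ is maximized exactly at u = ±m, and in particular g(m) ≥ g(u) for all u. -/
/-! Since `tanh` is strictly concave on `[0, ∞)` with `tanh 0 = 0` and `tanh' 0 = 1`, the slope
`u ↦ tanh (β u) / u` is strictly decreasing on `(0, ∞)`, close to `β > 1` near `0` and below `1`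
at `u = 1`; so it equals `1` at exactly one point `m`. Hence `g' u = β (tanh (β u) - u)` is
positive on `(0, m)` and negative on `(m, ∞)`: `g` rises on `[0, m]` and falls on `[m, ∞)`, and
since `g` is even this pins down its maximisers as `±m`. -/

open Real Set Filter Topology

namespace Real

theorem hasDerivAt_tanh (x : ℝ) : HasDerivAt tanh (1 / cosh x ^ 2) x := by
  have h := (hasDerivAt_sinh x).div (hasDerivAt_cosh x) (cosh_pos x).ne'
  rw [funext tanh_eq_sinh_div_cosh]
  refine h.congr_deriv ?_
  rw [← cosh_sq_sub_sinh_sq x]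
  ring

theorem differentiable_tanh : Differentiable ℝ tanh :=
  fun x => (hasDerivAt_tanh x).differentiableAt

theorem deriv_tanh : deriv tanh = fun x => 1 / cosh x ^ 2 :=
  funext fun x => (hasDerivAt_tanh x).deriv

theorem strictConcaveOn_tanh : StrictConcaveOn ℝ (Ici 0) tanh := by
  refine StrictAntiOn.strictConcaveOn_of_deriv (convex_Ici 0)
    differentiable_tanh.continuous.continuousOn ?_
  rw [deriv_tanh, interior_Ici]
  intro x hx y hy hxy
  have := cosh_strictMonoOn (Ioi_subset_Ici_self hx) (Ioi_subset_Ici_self hy) hxy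
  have := cosh_pos x
  dsimp only
  gcongr

theorem strictAntiOn_tanh_div_self : StrictAntiOn (fun x => tanh x / x) (Ioi 0) := by
  intro x hx y hy hxy
  simpa using strictConcaveOn_tanh.secant_strict_mono self_mem_Ici (Ioi_subset_Ici_self hx)
    (Ioi_subset_Ici_self hy) hx.ne' hy.ne' hxy

theorem tendsto_tanh_div_self : Tendsto (fun x => tanh x / x) (𝓝[>] 0) (𝓝 1) := by
  simpa [div_eq_inv_mul] using (hasDerivAt_tanh 0).tendsto_slope_zero_right

end Real

section Even

variable {α β : Type*} [AddCommGroup α] [LinearOrder α] [IsOrderedAddMonoid α] [Preorder β]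
  {g : α → β} {m : α}

theorem Function.Even.lt_of_strictMonoOn_of_strictAntiOn (hg : g.Even) (hm : 0 ≤ m)
    (hmono : StrictMonoOn g (Icc 0 m)) (hanti : StrictAntiOn g (Ici m)) {u : α} (hum : u ≠ m)
    (hum' : u ≠ -m) : g u < g m := by
  suffices h : ∀ v, 0 ≤ v → v ≠ m → g v < g m by
    rcases le_total 0 u with hu | hu
    · exact h u hu hum
    · rw [← hg u]
      exact h (-u) (neg_nonneg.2 hu) fun h => hum' (neg_eq_iff_eq_neg.1 h)
  intro v hv hvm
  rcases hvm.lt_or_gt with h | h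
  · exact hmono ⟨hv, h.le⟩ ⟨hm, le_rfl⟩ h
  · exact hanti self_mem_Ici h.le h

theorem Function.Even.le_of_strictMonoOn_of_strictAntiOn (hg : g.Even) (hm : 0 ≤ m)
    (hmono : StrictMonoOn g (Icc 0 m)) (hanti : StrictAntiOn g (Ici m)) (u : α) :
    g u ≤ g m := by
  by_cases hum : u = m
  · rw [hum]
  by_cases hum' : u = -m
  · rw [hum', hg]
  exact (hg.lt_of_strictMonoOn_of_strictAntiOn hm hmono hanti hum hum').le

end Even

theorem strictAntiOn_tanh_mul_div {β : ℝ} (hβ : 0 < β) :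
    StrictAntiOn (fun u => tanh (β * u) / u) (Ioi 0) := by
  intro x hx y hy hxy
  have key := strictAntiOn_tanh_div_self (mul_pos hβ hx) (mul_pos hβ hy) (by gcongr)
  have hscale : ∀ u, tanh (β * u) / (β * u) = tanh (β * u) / u / β := fun u => by
    rw [div_div, mul_comm]
  simp only [hscale] at key
  exact (div_lt_div_iff_of_pos_right hβ).1 key

theorem exists_pos_eq_tanh_mul {β : ℝ} (hβ : 1 < β) : ∃ m, 0 < m ∧ m = tanh (β * m) := by
  have hβ0 : 0 < β := by linarith
  obtain ⟨δ, hδ, hδβ⟩ : ∃ δ, β⁻¹ < tanh δ / δ ∧ δ ∈ Ioo 0 β :=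
    ((tendsto_tanh_div_self.eventually (lt_mem_nhds (inv_lt_one_of_one_lt₀ hβ))).and
      (Ioo_mem_nhdsGT hβ0)).exists
  have hcont : ContinuousOn (fun x => tanh x / x) (Icc δ β) :=
    differentiable_tanh.continuous.continuousOn.div continuousOn_id
      fun x hx => (hδβ.1.trans_le hx.1).ne'
  have hβlt : tanh β / β < β⁻¹ := by
    rw [div_eq_mul_inv]
    exact mul_lt_of_lt_one_left (inv_pos.2 hβ0) (tanh_lt_one β)
  obtain ⟨x, hx, hxβ⟩ := intermediate_value_Icc' hδβ.2.le hcont ⟨hβlt.le, hδ.le⟩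
  have hx0 : 0 < x := hδβ.1.trans_le hx.1
  refine ⟨x / β, by positivity, ?_⟩
  rw [mul_div_cancel₀ x hβ0.ne']
  field_simp at hxβ ⊢
  linarith

theorem lt_tanh_mul_iff {β m u : ℝ} (hβ : 0 < β) (hm0 : 0 < m) (hm : m = tanh (β * m))
    (hu : 0 < u) : u < tanh (β * u) ↔ u < m := by
  have hrm : tanh (β * m) / m = 1 := by rw [← hm, div_self hm0.ne']
  rw [← one_lt_div hu, ← hrm]
  exact (strictAntiOn_tanh_mul_div hβ).lt_iff_gt hm0 hu

theorem tanh_mul_lt_iff {β m u : ℝ} (hβ : 0 < β) (hm0 : 0 < m) (hm : m = tanh (β * m))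
    (hu : 0 < u) : tanh (β * u) < u ↔ m < u := by
  have hrm : tanh (β * m) / m = 1 := by rw [← hm, div_self hm0.ne']
  rw [← div_lt_one hu, ← hrm]
  exact (strictAntiOn_tanh_mul_div hβ).lt_iff_gt hu hm0

theorem eq_of_eq_tanh_mul {β m m' : ℝ} (hβ : 0 < β) (hm0 : 0 < m) (hm : m = tanh (β * m))
    (hm'0 : 0 < m') (hm' : m' = tanh (β * m')) : m' = m := by
  refine (strictAntiOn_tanh_mul_div hβ).injOn hm'0 hm0 ?_
  simp only [← hm, ← hm', div_self hm0.ne', div_self hm'0.ne']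

noncomputable def curieWeissPotential (β u : ℝ) : ℝ := -β * u ^ 2 / 2 + log (cosh (β * u))

theorem hasDerivAt_curieWeissPotential (β u : ℝ) :
    HasDerivAt (curieWeissPotential β) (β * (tanh (β * u) - u)) u := by
  have hβu : HasDerivAt (fun u => β * u) β u := by simpa using (hasDerivAt_id u).const_mul β
  have hsq : HasDerivAt (fun u => -β * u ^ 2 / 2) (-β * u) u := by
    refine (((hasDerivAt_pow 2 u).const_mul (-β)).div_const 2).congr_deriv ?_
    ring
  refine (hsq.add (hβu.cosh.log (cosh_pos _).ne')).congr_deriv ?_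
  rw [tanh_eq_sinh_div_cosh]
  ring

theorem curieWeissPotential_even (β : ℝ) : Function.Even (curieWeissPotential β) := fun u => by
  simp only [curieWeissPotential, mul_neg, cosh_neg, neg_sq]

theorem strictMonoOn_curieWeissPotential {β m : ℝ} (hβ : 0 < β) (hm0 : 0 < m)
    (hm : m = tanh (β * m)) : StrictMonoOn (curieWeissPotential β) (Icc 0 m) := by
  refine strictMonoOn_of_deriv_pos (convex_Icc 0 m)
    (fun u _ => (hasDerivAt_curieWeissPotential β u).continuousAt.continuousWithinAt) ?_
  intro u hu
  rw [interior_Icc] at hu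
  rw [(hasDerivAt_curieWeissPotential β u).deriv]
  exact mul_pos hβ (sub_pos.2 ((lt_tanh_mul_iff hβ hm0 hm hu.1).2 hu.2))

theorem strictAntiOn_curieWeissPotential {β m : ℝ} (hβ : 0 < β) (hm0 : 0 < m)
    (hm : m = tanh (β * m)) : StrictAntiOn (curieWeissPotential β) (Ici m) := by
  refine strictAntiOn_of_deriv_neg (convex_Ici m)
    (fun u _ => (hasDerivAt_curieWeissPotential β u).continuousAt.continuousWithinAt) ?_
  intro u hu
  rw [interior_Ici] at hu
  rw [(hasDerivAt_curieWeissPotential β u).deriv]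
  exact mul_neg_of_pos_of_neg hβ (sub_neg.2 ((tanh_mul_lt_iff hβ hm0 hm (hm0.trans hu)).2 hu))

/-- for `β > 1` there is a unique `m > 0` with `m = tanh(βm)`; moreover
`g(u) = −βu²/2 + log cosh(βu)` is maximized exactly at `u = ±m`; in particular
`g(m) ≥ g(u)` for all `u`. -/
theorem curieWeiss_fixed_point (β : ℝ) (hβ : 1 < β) :
    ∃ m : ℝ, 0 < m ∧ m = Real.tanh (β * m) ∧
      (∀ m' : ℝ, 0 < m' → m' = Real.tanh (β * m') → m' = m) ∧
      (∀ u : ℝ, -β * u ^ 2 / 2 + Real.log (Real.cosh (β * u))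
          ≤ -β * m ^ 2 / 2 + Real.log (Real.cosh (β * m))) ∧
      (∀ u : ℝ, -β * u ^ 2 / 2 + Real.log (Real.cosh (β * u))
          = -β * m ^ 2 / 2 + Real.log (Real.cosh (β * m)) → u = m ∨ u = -m) := by
  have hβ0 : 0 < β := by linarith
  obtain ⟨m, hm0, hm⟩ := exists_pos_eq_tanh_mul hβ
  have heven := curieWeissPotential_even β
  have hmono := strictMonoOn_curieWeissPotential hβ0 hm0 hm
  have hanti := strictAntiOn_curieWeissPotential hβ0 hm0 hm
  refine ⟨m, hm0, hm, fun m' hm'0 hm' => eq_of_eq_tanh_mul hβ0 hm0 hm hm'0 hm',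
    heven.le_of_strictMonoOn_of_strictAntiOn hm0.le hmono hanti, fun u hu => ?_⟩
  by_contra! hum
  exact (heven.lt_of_strictMonoOn_of_strictAntiOn hm0.le hmono hanti hum.1 hum.2).ne hu
end

section
/- Fix β > 1, θ₀ ∈ ℝ^d \ {0}, m the positive root of m = tanh(βm), p = (1+m)/2. Define μ_z := E[tanh(βm + θ₀ᵀX) | X ~ N_d(zθ₀, I_d)] for z = ±1, and α₀ := E_{P_{θ₀}} sech²(βm + θ₀ᵀX), where P_{θ₀} is the mixture p·N_d(θ₀, I_d) + (1−p)·N_d(−θ₀, I_d). Then α₀ = (1 − m²)(1 − (μ₁ − μ₋₁)/2). -/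
open MeasureTheory
open scoped RealInnerProductSpace ENNReal

/-- The asymmetric two-component Gaussian mixture
`P_{θ₀} = ((1+m)/2) N_d(θ₀, I_d) + ((1−m)/2) N_d(−θ₀, I_d)`. -/
noncomputable def asymMix (d : ℕ) (θ₀ : EuclideanSpace ℝ (Fin d)) (m : ℝ) :
    Measure (EuclideanSpace ℝ (Fin d)) :=
  ENNReal.ofReal ((1 + m) / 2) • gaussian d θ₀ + ENNReal.ofReal ((1 - m) / 2) • gaussian d (-θ₀)

namespace Alpha0Aux

open Real

noncomputable def gdens (d : ℕ) (μ : EuclideanSpace ℝ (Fin d)) (x : EuclideanSpace ℝ (Fin d)) : ℝ :=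
  (2 * Real.pi) ^ (-(d : ℝ) / 2) * Real.exp (-‖x - μ‖ ^ 2 / 2)

variable {d : ℕ}

lemma gaussian_eq (μ : EuclideanSpace ℝ (Fin d)) :
    gaussian d μ = volume.withDensity (fun x => ENNReal.ofReal (gdens d μ x)) := rfl

lemma gdens_nonneg (μ x : EuclideanSpace ℝ (Fin d)) : 0 ≤ gdens d μ x := by
  unfold gdens; positivity

lemma gdens_continuous (μ : EuclideanSpace ℝ (Fin d)) : Continuous (gdens d μ) := by
  unfold gdens; fun_prop

lemma gdens_meas (μ : EuclideanSpace ℝ (Fin d)) :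
    Measurable (fun x => (gdens d μ x).toNNReal) :=
  (gdens_continuous μ).measurable.real_toNNReal

lemma integral_gdens_eq (μ : EuclideanSpace ℝ (Fin d)) (f : EuclideanSpace ℝ (Fin d) → ℝ) :
    ∫ x, f x ∂(gaussian d μ) = ∫ x, f x * gdens d μ x := by
  rw [gaussian_eq]
  have : (fun x => ENNReal.ofReal (gdens d μ x))
      = fun x => ((fun x => (gdens d μ x).toNNReal) x : ℝ≥0∞) := rfl
  rw [this, integral_withDensity_eq_integral_smul (gdens_meas μ)]
  congr 1; ext x
  simp [NNReal.smul_def, Real.coe_toNNReal _ (gdens_nonneg μ x), mul_comm]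

lemma integrable_gdens (μ : EuclideanSpace ℝ (Fin d)) : Integrable (gdens d μ) := by
  unfold gdens
  apply Integrable.const_mul
  have h : Integrable (fun x : EuclideanSpace ℝ (Fin d) => Real.exp (-(1/2) * ‖x‖ ^ 2)) := by
    have := (GaussianFourier.integrable_cexp_neg_mul_sq_norm_add (V := EuclideanSpace ℝ (Fin d))
      (b := (1/2 : ℂ)) (by norm_num) 0 0).norm
    simp only [Complex.norm_exp] at this
    convert this using 2 with x
    simp [← Complex.ofReal_pow]
  have := h.comp_sub_right μ
  convert this using 2 with x; ring

lemma integral_gdens (μ : EuclideanSpace ℝ (Fin d)) : ∫ x, gdens d μ x = 1 := by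
  unfold gdens
  rw [MeasureTheory.integral_const_mul]
  have h1 : ∫ x : EuclideanSpace ℝ (Fin d), Real.exp (-‖x - μ‖ ^ 2 / 2)
      = ∫ x : EuclideanSpace ℝ (Fin d), Real.exp (-(1/2) * ‖x‖ ^ 2) := by
    rw [← integral_sub_right_eq_self (fun x => Real.exp (-(1/2) * ‖x‖ ^ 2)) μ]
    congr 1; ext x; ring_nf
  rw [h1, GaussianFourier.integral_rexp_neg_mul_sq_norm (by norm_num : (0:ℝ) < 1/2),
    finrank_euclideanSpace_fin]
  rw [show (π / (1/2)) = 2 * π by ring, ← Real.rpow_add (by positivity),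
    show (-(d:ℝ)/2 + (d:ℝ)/2) = 0 by ring, Real.rpow_zero]

lemma integrable_bdd_gdens (μ : EuclideanSpace ℝ (Fin d))
    {f : EuclideanSpace ℝ (Fin d) → ℝ} (hf : Continuous f) (C : ℝ) (hC : ∀ x, ‖f x‖ ≤ C) :
    Integrable (fun x => f x * gdens d μ x) :=
  (integrable_gdens μ).bdd_mul hf.aestronglyMeasurable (Filter.Eventually.of_forall hC)

lemma integrable_bdd_gmeasure (μ : EuclideanSpace ℝ (Fin d))
    {f : EuclideanSpace ℝ (Fin d) → ℝ} (hf : Continuous f) (C : ℝ) (hC : ∀ x, ‖f x‖ ≤ C) :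
    Integrable f (gaussian d μ) := by
  rw [gaussian_eq]
  have : (fun x => ENNReal.ofReal (gdens d μ x))
      = fun x => ((fun x => (gdens d μ x).toNNReal) x : ℝ≥0∞) := rfl
  rw [this, integrable_withDensity_iff_integrable_smul (gdens_meas μ)]
  apply (integrable_bdd_gdens μ hf C hC).congr
  filter_upwards with x
  simp [NNReal.smul_def, Real.coe_toNNReal _ (gdens_nonneg μ x), mul_comm]

lemma tanh_lt_one' (x : ℝ) : Real.tanh x < 1 := by
  rw [Real.tanh_eq_sinh_div_cosh, div_lt_one (Real.cosh_pos x), Real.sinh_eq, Real.cosh_eq]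
  have := Real.exp_pos (-x); linarith

lemma abs_tanh_le_one (x : ℝ) : |Real.tanh x| ≤ 1 := by
  rw [abs_le]
  refine ⟨?_, (tanh_lt_one' x).le⟩
  rw [Real.tanh_eq_sinh_div_cosh, le_div_iff₀ (Real.cosh_pos x), Real.sinh_eq, Real.cosh_eq]
  have := Real.exp_pos x; linarith

lemma sech_sq_eq (a : ℝ) : (1 / Real.cosh a) ^ 2 = 1 - Real.tanh a ^ 2 := by
  rw [Real.tanh_eq_sinh_div_cosh]
  field_simp
  have := Real.cosh_sq a; linarith

lemma abs_sech_sq_le_one (a : ℝ) : |(1 / Real.cosh a) ^ 2| ≤ 1 := by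
  rw [abs_of_nonneg (by positivity), sech_sq_eq]
  nlinarith [abs_tanh_le_one a, abs_nonneg (Real.tanh a)]

lemma continuous_tanh' : Continuous Real.tanh := by
  have : Real.tanh = fun x => Real.sinh x / Real.cosh x := by
    ext x; exact Real.tanh_eq_sinh_div_cosh x
  rw [this]
  exact Real.continuous_sinh.div Real.continuous_cosh (fun x => (Real.cosh_pos x).ne')

lemma key_id (c t : ℝ) :
    Real.tanh (c + t) * ((1 + Real.tanh c) / 2 * Real.exp t + (1 - Real.tanh c) / 2 * Real.exp (-t))
      = (1 + Real.tanh c) / 2 * Real.exp t - (1 - Real.tanh c) / 2 * Real.exp (-t) := by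
  have h1 := Real.cosh_pos (c + t)
  have h2 := Real.cosh_pos c
  simp only [Real.tanh_eq_sinh_div_cosh, Real.sinh_eq, Real.cosh_eq, Real.exp_add, Real.exp_neg]
  have e1 := Real.exp_pos c
  have e2 := Real.exp_pos t
  field_simp
  ring

lemma point_id (θ₀ : EuclideanSpace ℝ (Fin d)) (c : ℝ) (x : EuclideanSpace ℝ (Fin d)) :
    Real.tanh (c + ⟪θ₀, x⟫) *
        ((1 + Real.tanh c) / 2 * gdens d θ₀ x + (1 - Real.tanh c) / 2 * gdens d (-θ₀) x)
      = (1 + Real.tanh c) / 2 * gdens d θ₀ x - (1 - Real.tanh c) / 2 * gdens d (-θ₀) x := by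
  unfold gdens
  have h1 : ‖x - θ₀‖ ^ 2 = ‖x‖ ^ 2 - 2 * ⟪θ₀, x⟫ + ‖θ₀‖ ^ 2 := by
    rw [@norm_sub_sq_real, real_inner_comm]
  have h2 : ‖x - -θ₀‖ ^ 2 = ‖x‖ ^ 2 + 2 * ⟪θ₀, x⟫ + ‖θ₀‖ ^ 2 := by
    rw [sub_neg_eq_add, @norm_add_sq_real, real_inner_comm]
  rw [h1, h2]
  have e1 : Real.exp (-(‖x‖ ^ 2 - 2 * ⟪θ₀, x⟫ + ‖θ₀‖ ^ 2) / 2)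
      = Real.exp (-(‖x‖ ^ 2 + ‖θ₀‖ ^ 2) / 2) * Real.exp ⟪θ₀, x⟫ := by
    rw [← Real.exp_add]; ring_nf
  have e2 : Real.exp (-(‖x‖ ^ 2 + 2 * ⟪θ₀, x⟫ + ‖θ₀‖ ^ 2) / 2)
      = Real.exp (-(‖x‖ ^ 2 + ‖θ₀‖ ^ 2) / 2) * Real.exp (-⟪θ₀, x⟫) := by
    rw [← Real.exp_add]; ring_nf
  rw [e1, e2]
  linear_combination ((2 * Real.pi) ^ (-(d : ℝ) / 2) * Real.exp (-(‖x‖ ^ 2 + ‖θ₀‖ ^ 2) / 2)) *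
    key_id c ⟪θ₀, x⟫

end Alpha0Aux

open Alpha0Aux

/-- with `β > 1`, `θ₀ ≠ 0`, `m` the positive root of `m = tanh(βm)`,
`μ_z := E[tanh(βm + θ₀ᵀX) | X ~ N_d(zθ₀, I_d)]` for `z = ±1`, and
`α₀ := E_{P_{θ₀}} sech²(βm + θ₀ᵀX)`, one has `α₀ = (1 − m²)(1 − (μ₁ − μ₋₁)/2)`. -/
theorem alpha0_identity (d : ℕ) (β m : ℝ) (θ₀ : EuclideanSpace ℝ (Fin d))
    (hθ : θ₀ ≠ 0) (hβ : 1 < β) (hm : 0 < m) (hfix : m = Real.tanh (β * m)) :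
    ∫ x, (1 / Real.cosh (β * m + ⟪θ₀, x⟫)) ^ 2 ∂(asymMix d θ₀ m)
      = (1 - m ^ 2) *
        (1 - ((∫ x, Real.tanh (β * m + ⟪θ₀, x⟫) ∂(gaussian d θ₀))
              - ∫ x, Real.tanh (β * m + ⟪θ₀, x⟫) ∂(gaussian d (-θ₀))) / 2) := by
  have hm1 : m < 1 := hfix ▸ tanh_lt_one' (β * m)
  set f : EuclideanSpace ℝ (Fin d) → ℝ := fun x => Real.tanh (β * m + ⟪θ₀, x⟫) with hf
  set s : EuclideanSpace ℝ (Fin d) → ℝ := fun x => (1 / Real.cosh (β * m + ⟪θ₀, x⟫)) ^ 2 with hs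
  have hinner : Continuous fun x : EuclideanSpace ℝ (Fin d) => ⟪θ₀, x⟫ :=
    continuous_const.inner continuous_id
  have hfc : Continuous f := continuous_tanh'.comp (continuous_const.add hinner)
  have hsc : Continuous s := by
    apply Continuous.pow
    exact continuous_const.div (Real.continuous_cosh.comp (continuous_const.add hinner))
      (fun x => (Real.cosh_pos _).ne')
  have hfb : ∀ x, ‖f x‖ ≤ 1 := fun x => abs_tanh_le_one _
  have hsb : ∀ x, ‖s x‖ ≤ 1 := fun x => abs_sech_sq_le_one _
  -- shorthand densities
  set P : EuclideanSpace ℝ (Fin d) → ℝ := fun x => gdens d θ₀ x with hP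
  set Q : EuclideanSpace ℝ (Fin d) → ℝ := fun x => gdens d (-θ₀) x with hQ
  have iP : Integrable P := integrable_gdens θ₀
  have iQ : Integrable Q := integrable_gdens (-θ₀)
  have ifP : Integrable (fun x => f x * P x) := integrable_bdd_gdens θ₀ hfc 1 hfb
  have ifQ : Integrable (fun x => f x * Q x) := integrable_bdd_gdens (-θ₀) hfc 1 hfb
  have isP : Integrable (fun x => s x * P x) := integrable_bdd_gdens θ₀ hsc 1 hsb
  have isQ : Integrable (fun x => s x * Q x) := integrable_bdd_gdens (-θ₀) hsc 1 hsb
  -- pointwise identity with (1±m)/2 weights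
  have hpt : ∀ x, f x * ((1 + m) / 2 * P x + (1 - m) / 2 * Q x)
      = (1 + m) / 2 * P x - (1 - m) / 2 * Q x := by
    intro x
    have := point_id θ₀ (β * m) x
    rw [← hfix] at this
    exact this
  -- split the mixture integral
  have e0 : ∫ x, s x ∂(asymMix d θ₀ m)
      = (1 + m) / 2 * ∫ x, s x ∂(gaussian d θ₀)
        + (1 - m) / 2 * ∫ x, s x ∂(gaussian d (-θ₀)) := by
    have i1 : Integrable s (gaussian d θ₀) := integrable_bdd_gmeasure θ₀ hsc 1 hsb
    have i2 : Integrable s (gaussian d (-θ₀)) := integrable_bdd_gmeasure (-θ₀) hsc 1 hsb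
    rw [asymMix, integral_add_measure (i1.smul_measure ENNReal.ofReal_ne_top)
      (i2.smul_measure ENNReal.ofReal_ne_top), integral_smul_measure, integral_smul_measure,
      ENNReal.toReal_ofReal (by linarith), ENNReal.toReal_ofReal (by linarith)]
    simp [smul_eq_mul]
  rw [e0, integral_gdens_eq θ₀ s, integral_gdens_eq (-θ₀) s,
    integral_gdens_eq θ₀ f, integral_gdens_eq (-θ₀) f]
  set J1 : ℝ := ∫ x, f x * P x with hJ1
  set J2 : ℝ := ∫ x, f x * Q x with hJ2
  -- hsum : (1+m)/2 * J1 + (1-m)/2 * J2 = m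
  have hsum : (1 + m) / 2 * J1 + (1 - m) / 2 * J2 = m := by
    have : (1 + m) / 2 * J1 + (1 - m) / 2 * J2
        = ∫ x, ((1 + m) / 2 * (f x * P x) + (1 - m) / 2 * (f x * Q x)) := by
      rw [integral_add (ifP.const_mul _) (ifQ.const_mul _), MeasureTheory.integral_const_mul,
        MeasureTheory.integral_const_mul]
    rw [this]
    have : ∫ x, ((1 + m) / 2 * (f x * P x) + (1 - m) / 2 * (f x * Q x))
        = ∫ x, ((1 + m) / 2 * P x - (1 - m) / 2 * Q x) := by
      congr 1; ext x
      linear_combination hpt x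
    rw [this, integral_sub (iP.const_mul _) (iQ.const_mul _), MeasureTheory.integral_const_mul,
      MeasureTheory.integral_const_mul, hP, hQ, integral_gdens, integral_gdens]
    ring
  -- main LHS computation
  have hLHS : (1 + m) / 2 * (∫ x, s x * P x) + (1 - m) / 2 * ∫ x, s x * Q x
      = 1 - ((1 + m) / 2 * J1 - (1 - m) / 2 * J2) := by
    have h1 : (1 + m) / 2 * (∫ x, s x * P x) + (1 - m) / 2 * ∫ x, s x * Q x
        = ∫ x, ((1 + m) / 2 * (s x * P x) + (1 - m) / 2 * (s x * Q x)) := by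
      rw [integral_add (isP.const_mul _) (isQ.const_mul _), MeasureTheory.integral_const_mul,
        MeasureTheory.integral_const_mul]
    have h2 : ∀ x, (1 + m) / 2 * (s x * P x) + (1 - m) / 2 * (s x * Q x)
        = ((1 + m) / 2 * P x + (1 - m) / 2 * Q x)
          - ((1 + m) / 2 * (f x * P x) - (1 - m) / 2 * (f x * Q x)) := by
      intro x
      have hx := hpt x
      have hsx : s x = 1 - f x ^ 2 := sech_sq_eq _
      linear_combination ((1 + m) / 2 * P x + (1 - m) / 2 * Q x) * hsx - f x * hx
    have h3 : ∫ x, ((1 + m) / 2 * (s x * P x) + (1 - m) / 2 * (s x * Q x))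
        = ∫ x, (((1 + m) / 2 * P x + (1 - m) / 2 * Q x)
            - ((1 + m) / 2 * (f x * P x) - (1 - m) / 2 * (f x * Q x))) := by
      congr 1; ext x; exact h2 x
    have iSint : Integrable (fun x => (1 + m) / 2 * P x + (1 - m) / 2 * Q x) :=
      (iP.const_mul _).add (iQ.const_mul _)
    have iDint : Integrable (fun x => (1 + m) / 2 * (f x * P x) - (1 - m) / 2 * (f x * Q x)) :=
      (ifP.const_mul _).sub (ifQ.const_mul _)
    rw [h1, h3, integral_sub iSint iDint,
      integral_add (iP.const_mul _) (iQ.const_mul _),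
      integral_sub (ifP.const_mul _) (ifQ.const_mul _),
      MeasureTheory.integral_const_mul, MeasureTheory.integral_const_mul,
      MeasureTheory.integral_const_mul, MeasureTheory.integral_const_mul,
      hP, hQ, integral_gdens, integral_gdens, ← hJ1, ← hJ2]
    ring
  rw [hLHS]
  linear_combination (-m) * hsum
end

section
/- With the setup of the low-temperature regime (β > 1, m = tanh(βm), μ_{±1} as above), one has μ₁ > μ₋₁, and consequently 1 − βα₀ ≥ 1 − β(1 − m²) > 0, where α₀ = (1 − m²)(1 − (μ₁ − μ₋₁)/2). -/
/-!
Centering the Gaussian, `μ_z = E tanh(βm + ⟪θ₀, X⟫ + z‖θ₀‖²)` with `X ~ N_d(0, I_d)`, so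
`μ₁ > μ₋₁` because `tanh` is strictly increasing and `‖θ₀‖² > 0`. With `t = βm > 0` and
`m = tanh t`, the bound `β(1 − m²) < 1` reads `t(1 − tanh² t) < tanh t`, i.e. `t < sinh t cosh t`,
which is `2t < sinh 2t`. The middle inequality is `β(1 − m²)(μ₁ − μ₋₁)/2 ≥ 0`.
-/

open MeasureTheory
open scoped RealInnerProductSpace ENNReal

namespace Real

theorem tanh_strictMono : StrictMono tanh := fun a b h => by
  have hmem (x : ℝ) : tanh x ∈ Set.Ioo (-1) 1 := ⟨neg_one_lt_tanh x, tanh_lt_one x⟩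
  rwa [← artanh_lt_artanh_iff (hmem a) (hmem b), artanh_tanh, artanh_tanh]

theorem mul_one_sub_tanh_sq_lt_tanh {t : ℝ} (ht : 0 < t) : t * (1 - tanh t ^ 2) < tanh t := by
  have hc := cosh_pos t
  have hsinh : 2 * t < 2 * sinh t * cosh t := sinh_two_mul t ▸ self_lt_sinh_iff.2 (by linarith)
  have hsech : 1 - tanh t ^ 2 = 1 / cosh t ^ 2 := by
    rw [tanh_eq_sinh_div_cosh]
    field_simp
    linear_combination cosh_sq_sub_sinh_sq t
  rw [hsech, mul_one_div, tanh_eq_sinh_div_cosh, div_lt_div_iff₀ (by positivity) hc]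
  nlinarith

theorem mul_one_sub_sq_lt_one_of_eq_tanh {β m : ℝ} (hm : 0 < m) (hfix : m = tanh (β * m)) :
    β * (1 - m ^ 2) < 1 := by
  have ht : 0 < β * m := tanh_strictMono.lt_iff_lt.1 (by rwa [tanh_zero, ← hfix])
  have key := mul_one_sub_tanh_sq_lt_tanh ht
  rw [← hfix] at key
  exact lt_of_mul_lt_mul_right (by linarith) hm.le

end Real

theorem MeasureTheory.integral_lt_integral_of_forall_lt {α : Type*} [MeasurableSpace α]
    {μ : Measure α} [NeZero μ] {f g : α → ℝ} (hf : Integrable f μ) (hg : Integrable g μ)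
    (hfg : ∀ x, f x < g x) : ∫ x, f x ∂μ < ∫ x, g x ∂μ := by
  have hsupp : Function.support (fun x => g x - f x) = Set.univ :=
    Set.eq_univ_of_forall fun x => (sub_pos.2 (hfg x)).ne'
  have hpos : 0 < ∫ x, g x - f x ∂μ := by
    rw [integral_pos_iff_support_of_nonneg (fun x => (sub_pos.2 (hfg x)).le) (hg.sub hf), hsupp]
    exact Measure.measure_univ_pos.2 (NeZero.ne μ)
  rw [integral_sub hg hf] at hpos
  linarith

lemma gaussian_eq_map_add (d : ℕ) (μ : EuclideanSpace ℝ (Fin d)) :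
    gaussian d μ = (gaussian d 0).map (· + μ) := by
  refine Measure.ext_of_lintegral _ fun f hf => ?_
  rw [lintegral_map hf (measurable_add_const μ), gaussian, gaussian,
    lintegral_withDensity_eq_lintegral_mul _ (by fun_prop) hf,
    lintegral_withDensity_eq_lintegral_mul _ (by fun_prop) (by fun_prop),
    ← lintegral_add_right_eq_self _ μ]
  simp

lemma integral_gaussian_eq_integral_add {E : Type*} [NormedAddCommGroup E] [NormedSpace ℝ E]
    (d : ℕ) (μ : EuclideanSpace ℝ (Fin d)) (f : EuclideanSpace ℝ (Fin d) → E) :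
    ∫ x, f x ∂gaussian d μ = ∫ x, f (x + μ) ∂gaussian d 0 := by
  rw [gaussian_eq_map_add, (measurableEmbedding_addRight μ).integral_map]

instance isFiniteMeasure_gaussian_zero (d : ℕ) : IsFiniteMeasure (gaussian d 0) := by
  refine isFiniteMeasure_withDensity_ofReal (Integrable.hasFiniteIntegral ?_)
  have hexp := (GaussianFourier.integrable_cexp_neg_mul_sq_norm_add
    (V := EuclideanSpace ℝ (Fin d)) (b := 1 / 2) (by norm_num) 0 0).norm
  refine (hexp.const_mul ((2 * Real.pi) ^ (-(d : ℝ) / 2))).congr (ae_of_all _ fun x => ?_)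
  simp only [Complex.norm_exp, sub_zero]
  congr 2
  simp [← Complex.ofReal_pow]
  ring

instance neZero_gaussian_zero (d : ℕ) : NeZero (gaussian d 0) := by
  refine ⟨fun h => ?_⟩
  rw [gaussian, withDensity_eq_zero_iff (by fun_prop)] at h
  obtain ⟨x, hx⟩ := h.exists
  exact (ENNReal.ofReal_pos.2 (by positivity)).ne' hx

lemma integral_gaussian_neg_lt_integral_gaussian {φ : ℝ → ℝ} (hφ : StrictMono φ) {C : ℝ}
    (hC : ∀ s, |φ s| ≤ C) {d : ℕ} {θ : EuclideanSpace ℝ (Fin d)} (hθ : θ ≠ 0) :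
    ∫ x, φ ⟪θ, x⟫ ∂gaussian d (-θ) < ∫ x, φ ⟪θ, x⟫ ∂gaussian d θ := by
  have hint (z : EuclideanSpace ℝ (Fin d)) :
      Integrable (fun x => φ ⟪θ, x + z⟫) (gaussian d 0) := by
    have hmeas : Measurable fun x : EuclideanSpace ℝ (Fin d) => ⟪θ, x + z⟫ := by fun_prop
    exact .of_bound (hφ.monotone.measurable.comp hmeas).aestronglyMeasurable C
      (ae_of_all _ fun x => (Real.norm_eq_abs _).trans_le (hC _))
  rw [integral_gaussian_eq_integral_add d (-θ), integral_gaussian_eq_integral_add d θ]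
  refine integral_lt_integral_of_forall_lt (hint _) (hint _) fun x => hφ ?_
  have hθ2 : 0 < ‖θ‖ ^ 2 := by positivity
  simp only [inner_add_right, inner_neg_right, real_inner_self_eq_norm_sq]
  linarith

/-- in the low-temperature regime (`β > 1`, `m` the positive root of
`m = tanh(βm)`, `θ₀ ≠ 0`), with `μ_z := E[tanh(βm + θ₀ᵀX) | X ~ N_d(zθ₀, I_d)]`, one has
`μ₁ > μ₋₁`, and consequently, for `α₀ = (1 − m²)(1 − (μ₁ − μ₋₁)/2)`,
`1 − βα₀ ≥ 1 − β(1 − m²) > 0`. -/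
theorem mu_monotone_and_info_pos (d : ℕ) (β m : ℝ) (θ₀ : EuclideanSpace ℝ (Fin d))
    (hθ : θ₀ ≠ 0) (hβ : 1 < β) (hm : 0 < m) (hfix : m = Real.tanh (β * m)) :
    (∫ x, Real.tanh (β * m + ⟪θ₀, x⟫) ∂(gaussian d (-θ₀)))
        < ∫ x, Real.tanh (β * m + ⟪θ₀, x⟫) ∂(gaussian d θ₀) ∧
    1 - β * (1 - m ^ 2)
        ≤ 1 - β * ((1 - m ^ 2) *
            (1 - ((∫ x, Real.tanh (β * m + ⟪θ₀, x⟫) ∂(gaussian d θ₀))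
                  - ∫ x, Real.tanh (β * m + ⟪θ₀, x⟫) ∂(gaussian d (-θ₀))) / 2)) ∧
    0 < 1 - β * (1 - m ^ 2) := by
  have hμ := integral_gaussian_neg_lt_integral_gaussian (φ := fun s => Real.tanh (β * m + s))
    (fun _ _ h => Real.tanh_strictMono (by linarith)) (fun _ => (Real.abs_tanh_lt_one _).le) hθ
  have hm2 : 0 < 1 - m ^ 2 := by
    have := Real.tanh_sq_lt_one (β * m)
    rw [← hfix] at this
    linarith
  refine ⟨hμ, ?_, by linarith [Real.mul_one_sub_sq_lt_one_of_eq_tanh hm hfix]⟩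
  nlinarith [mul_pos (mul_pos (by linarith : (0 : ℝ) < β) hm2) (sub_pos.2 hμ)]
end
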